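/- There exists an absolute constant C > 0 with the following property. Let 2 ≤ a ≤ b, β > 0, let F : [a,b] → ℝ be twice continuously differentiable, and let m > 0 and K ≥ 0 satisfy |F'(r)| ≥ m and |F''(r)| ≤ K (log r)^{3/4} / r^β for all r ∈ [a,b]. Then |∫_a^b e^{i F(r)} / (r (log r)^{3/4}) dr| ≤ C (1/(a m) + K/(β a^β m²)). -/

import Mathlib

/-!
Write `e^{iF} w = F' e^{iF} · (w / F')` with the decreasing weight
`w r = (r (log r)^{3/4})⁻¹` and integrate by parts against `-i e^{iF}`, an antiderivative of
`F' e^{iF}`. The boundary terms are at most `(w a + w b) / m`, and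
`(w / F')' = w' / F' - w F'' / F'^2` contributes `∫ |w'| / m = (w a - w b) / m` (as `w` is
monotone) plus `∫ w |F''| / m^2`. The hypothesis on `F''` cancels the logarithm,
`w |F''| ≤ K r^{-β-1}`, whose integral is at most `K / (β a^β)`; finally `(log a)^{3/4} ≥ 1/2`
for `a ≥ 2` gives `w a ≤ 2 / a`, so `C = 4` works.
-/

open MeasureTheory intervalIntegral Set

theorem norm_integral_mul_exp_le {a b : ℝ} (hab : a ≤ b) {F F' q q' : ℝ → ℝ}
    (hF : ∀ r ∈ Icc a b, HasDerivAt F (F' r) r) (hF'i : IntervalIntegrable F' volume a b)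
    (hq : ∀ r ∈ Icc a b, HasDerivAt q (q' r) r) (hq'i : IntervalIntegrable q' volume a b) :
    ‖∫ r in a..b, ((F' r * q r : ℝ) : ℂ) * Complex.exp (Complex.I * F r)‖ ≤
      |q a| + |q b| + ∫ r in a..b, |q' r| := by
  rw [← uIcc_of_le hab] at hF hq
  set v : ℝ → ℂ := fun r => -Complex.I * Complex.exp (Complex.I * F r)
  have hv : ∀ r ∈ uIcc a b, HasDerivAt v (F' r * Complex.exp (Complex.I * F r)) r := fun r hr =>
    ((((hF r hr).ofReal_comp.const_mul Complex.I).cexp).const_mul (-Complex.I)).congr_deriv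
      (by linear_combination (-(Complex.exp (Complex.I * F r) * F' r)) * Complex.I_sq)
  have hnorm_v : ∀ r, ‖v r‖ = 1 := fun r => by
    simp [v, mul_comm Complex.I, Complex.norm_exp_ofReal_mul_I]
  have hFc : ContinuousOn F (uIcc a b) := fun r hr => (hF r hr).continuousAt.continuousWithinAt
  have hparts := integral_mul_deriv_eq_deriv_mul (fun r hr => (hq r hr).ofReal_comp) hv
    ⟨hq'i.1.ofReal, hq'i.2.ofReal⟩ (IntervalIntegrable.mul_continuousOn
      ⟨hF'i.1.ofReal, hF'i.2.ofReal⟩ (by fun_prop))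
  have hrest : ‖∫ r in a..b, (q' r : ℂ) * v r‖ ≤ ∫ r in a..b, |q' r| := by
    refine (intervalIntegral.norm_integral_le_integral_norm hab).trans_eq
      (integral_congr fun r _ => ?_)
    simp [hnorm_v]
  calc ‖∫ r in a..b, ((F' r * q r : ℝ) : ℂ) * Complex.exp (Complex.I * F r)‖
      = ‖(q b : ℂ) * v b - q a * v a - ∫ r in a..b, (q' r : ℂ) * v r‖ := by
        rw [← hparts]; congr 1; refine integral_congr fun r _ => ?_; push_cast; ring
    _ ≤ |q b| + |q a| + ∫ r in a..b, |q' r| := by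
        refine (norm_sub_le _ _).trans (add_le_add ((norm_sub_le _ _).trans ?_) hrest)
        simp [hnorm_v]
    _ = _ := by ring

theorem intervalIntegrable_deriv_of_nonpos {a b : ℝ} (hab : a ≤ b) {w w' : ℝ → ℝ}
    (hw : ∀ r ∈ Icc a b, HasDerivAt w (w' r) r) (hw' : ∀ r ∈ Icc a b, w' r ≤ 0) :
    IntervalIntegrable w' volume a b := by
  have hIoo : ∀ r ∈ Ioo (min a b) (max a b), r ∈ Icc a b := fun r hr => by
    rw [min_eq_left hab, max_eq_right hab] at hr; exact Ioo_subset_Icc_self hr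
  have hwc : ContinuousOn w (uIcc a b) := by
    rw [uIcc_of_le hab]; exact fun r hr => (hw r hr).continuousAt.continuousWithinAt
  simpa using (intervalIntegrable_deriv_of_nonneg (g := -w) (g' := -w') hwc.neg
    (fun r hr => (hw r (hIoo r hr)).neg) (fun r hr => neg_nonneg.mpr (hw' r (hIoo r hr)))).neg

theorem abs_div_sub_mul_div_sq_le {m d d' v v' : ℝ} (hm : 0 < m) (hd : m ≤ |d|) (hv : 0 ≤ v)
    (hv' : v' ≤ 0) : |v' / d - v * d' / d ^ 2| ≤ -v' / m + v * |d'| / m ^ 2 := by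
  refine (abs_sub _ _).trans (add_le_add ?_ ?_)
  · rw [abs_div, abs_of_nonpos hv']
    exact div_le_div_of_nonneg_left (neg_nonneg.mpr hv') hm hd
  · rw [abs_div, abs_mul, abs_of_nonneg hv, abs_pow]
    exact div_le_div_of_nonneg_left (by positivity) (by positivity) (pow_le_pow_left₀ hm.le hd 2)

theorem intervalIntegrable_deriv_div {a b : ℝ} (hab : a ≤ b) {F' F'' w w' : ℝ → ℝ}
    (hF'c : ContinuousOn F' (Icc a b)) (hF'ne : ∀ r ∈ Icc a b, F' r ≠ 0)
    (hF''i : IntervalIntegrable F'' volume a b) (hwc : ContinuousOn w (Icc a b))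
    (hw'i : IntervalIntegrable w' volume a b) :
    IntervalIntegrable (fun r => w' r / F' r - w r * F'' r / F' r ^ 2) volume a b := by
  rw [← uIcc_of_le hab] at hF'c hwc hF'ne
  refine (hw'i.mul_continuousOn (hF'c.inv₀ hF'ne)).sub
    (hF''i.continuousOn_mul ((hwc.div (hF'c.pow 2) fun r hr => pow_ne_zero 2 (hF'ne r hr))))
    |>.congr fun r _ => ?_
  simp only [Pi.inv_apply, Pi.div_apply, Pi.pow_apply]
  ring

theorem norm_integral_exp_mul_le_of_deriv_nonpos {a b m : ℝ} (hab : a ≤ b) (hm : 0 < m)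
    {F F' F'' w w' : ℝ → ℝ}
    (hF : ∀ r ∈ Icc a b, HasDerivAt F (F' r) r)
    (hF' : ∀ r ∈ Icc a b, HasDerivAt F' (F'' r) r) (hF''i : IntervalIntegrable F'' volume a b)
    (hF'm : ∀ r ∈ Icc a b, m ≤ |F' r|)
    (hw : ∀ r ∈ Icc a b, HasDerivAt w (w' r) r) (hw_nonneg : ∀ r ∈ Icc a b, 0 ≤ w r)
    (hw'_nonpos : ∀ r ∈ Icc a b, w' r ≤ 0) :
    ‖∫ r in a..b, Complex.exp (Complex.I * F r) * w r‖ ≤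
      2 * w a / m + (∫ r in a..b, w r * |F'' r|) / m ^ 2 := by
  have hF'ne : ∀ r ∈ Icc a b, F' r ≠ 0 := fun r hr => abs_pos.mp (hm.trans_le (hF'm r hr))
  have hF'c : ContinuousOn F' (Icc a b) := fun r hr => (hF' r hr).continuousAt.continuousWithinAt
  have hwc : ContinuousOn w (Icc a b) := fun r hr => (hw r hr).continuousAt.continuousWithinAt
  have hw'i : IntervalIntegrable w' volume a b :=
    intervalIntegrable_deriv_of_nonpos hab hw hw'_nonpos
  set q' : ℝ → ℝ := fun r => w' r / F' r - w r * F'' r / F' r ^ 2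
  have hq : ∀ r ∈ Icc a b, HasDerivAt (fun r => w r / F' r) (q' r) r := fun r hr =>
    ((hw r hr).div (hF' r hr) (hF'ne r hr)).congr_deriv (by simp only [q']; field_simp [hF'ne r hr])
  have hq'i : IntervalIntegrable q' volume a b :=
    intervalIntegrable_deriv_div hab hF'c hF'ne hF''i hwc hw'i
  have hq_le : ∀ r ∈ Icc a b, |w r / F' r| ≤ w r / m := fun r hr => by
    rw [abs_div, abs_of_nonneg (hw_nonneg r hr)]
    exact div_le_div_of_nonneg_left (hw_nonneg r hr) hm (hF'm r hr)
  have hq'_le : ∀ r ∈ Icc a b, |q' r| ≤ -w' r / m + w r * |F'' r| / m ^ 2 := fun r hr =>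
    abs_div_sub_mul_div_sq_le hm (hF'm r hr) (hw_nonneg r hr) (hw'_nonpos r hr)
  have hwF''i : IntervalIntegrable (fun r => w r * |F'' r|) volume a b :=
    hF''i.abs.continuousOn_mul (by rwa [uIcc_of_le hab])
  have hint_q' :
      ∫ r in a..b, |q' r| ≤ (w a - w b) / m + (∫ r in a..b, w r * |F'' r|) / m ^ 2 :=
    calc ∫ r in a..b, |q' r| ≤ ∫ r in a..b, (-w' r / m + w r * |F'' r| / m ^ 2) :=
          integral_mono_on hab hq'i.abs ((hw'i.neg.div_const m).add (hwF''i.div_const _)) hq'_le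
      _ = _ := by
          rw [integral_add (f := fun r => -w' r / m) (hw'i.neg.div_const m) (hwF''i.div_const _),
            intervalIntegral.integral_div, intervalIntegral.integral_div,
            intervalIntegral.integral_neg,
            integral_eq_sub_of_hasDerivAt (fun r hr => hw r (uIcc_of_le hab ▸ hr)) hw'i]
          ring
  have ha : a ∈ Icc a b := left_mem_Icc.mpr hab
  have hb : b ∈ Icc a b := right_mem_Icc.mpr hab
  calc _ = ‖∫ r in a..b, ((F' r * (w r / F' r) : ℝ) : ℂ) * Complex.exp (Complex.I * F r)‖ := by
        refine congrArg _ (integral_congr fun r hr => ?_)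
        rw [mul_div_cancel₀ _ (hF'ne r (uIcc_of_le hab ▸ hr)), mul_comm]
    _ ≤ |w a / F' a| + |w b / F' b| + ∫ r in a..b, |q' r| :=
        norm_integral_mul_exp_le hab hF (hF'c.intervalIntegrable_of_Icc hab) hq hq'i
    _ ≤ w a / m + w b / m + ((w a - w b) / m + (∫ r in a..b, w r * |F'' r|) / m ^ 2) :=
        add_le_add (add_le_add (hq_le a ha) (hq_le b hb)) hint_q'
    _ = _ := by ring

theorem integral_rpow_neg_sub_one_le {a b β : ℝ} (ha : 0 < a) (hab : a ≤ b) (hβ : 0 < β) :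
    ∫ r in a..b, r ^ (-β - 1) ≤ 1 / (β * a ^ β) := by
  have h0 : (0 : ℝ) ∉ uIcc a b := by
    rw [uIcc_of_le hab]; exact fun h => ha.not_ge h.1
  have hb : 0 ≤ b ^ (-β) := Real.rpow_nonneg (ha.trans_le hab).le _
  calc ∫ r in a..b, r ^ (-β - 1) = (a ^ (-β) - b ^ (-β)) / β := by
        rw [integral_rpow (Or.inr ⟨by linarith, h0⟩), sub_add_cancel, div_neg, ← neg_div,
          neg_sub]
    _ ≤ a ^ (-β) / β := by gcongr; linarith
    _ = 1 / (β * a ^ β) := by rw [Real.rpow_neg ha.le]; field_simp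

theorem hasDerivAt_mul_log_rpow {r : ℝ} (hr : 1 < r) (p : ℝ) :
    HasDerivAt (fun x => x * Real.log x ^ p) (Real.log r ^ p + p * Real.log r ^ (p - 1)) r := by
  have hlog : HasDerivAt Real.log r⁻¹ r := Real.hasDerivAt_log (by linarith)
  refine ((hasDerivAt_id r).mul ((Real.hasDerivAt_rpow_const
    (Or.inl (Real.log_pos hr).ne')).comp r hlog)).congr_deriv ?_
  simp only [id, Function.comp]
  field_simp

theorem hasDerivAt_inv_mul_log_rpow {r : ℝ} (hr : 1 < r) (p : ℝ) :
    HasDerivAt (fun x => (x * Real.log x ^ p)⁻¹)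
      (-(Real.log r ^ p + p * Real.log r ^ (p - 1)) / (r * Real.log r ^ p) ^ 2) r :=
  (hasDerivAt_mul_log_rpow hr p).inv
    (mul_pos (by linarith) (Real.rpow_pos_of_pos (Real.log_pos hr) p)).ne'

theorem inv_mul_log_rpow_le {a p : ℝ} (ha : 2 ≤ a) (hp₀ : 0 ≤ p) (hp₁ : p ≤ 1) :
    (a * Real.log a ^ p)⁻¹ ≤ 2 / a := by
  have hlog : 1 / 2 ≤ Real.log a :=
    (by linarith [Real.log_two_gt_d9] : (1 : ℝ) / 2 ≤ Real.log 2).trans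
      (Real.log_le_log (by norm_num) ha)
  have : 1 / 2 ≤ Real.log a ^ p :=
    calc (1 : ℝ) / 2 ≤ (1 / 2) ^ p := by
          simpa using Real.rpow_le_rpow_of_exponent_ge (x := (1 : ℝ) / 2) (by norm_num)
            (by norm_num) hp₁
      _ ≤ _ := Real.rpow_le_rpow (by norm_num) hlog hp₀
  rw [inv_le_comm₀ (by positivity) (by positivity), inv_div]
  nlinarith

theorem integral_inv_mul_log_rpow_mul_abs_le {a b β K p : ℝ} {f : ℝ → ℝ} (ha : 1 < a)
    (hab : a ≤ b) (hβ : 0 < β) (hK : 0 ≤ K) (hf : IntervalIntegrable f volume a b)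
    (hfK : ∀ r ∈ Icc a b, |f r| ≤ K * Real.log r ^ p / r ^ β) :
    ∫ r in a..b, (r * Real.log r ^ p)⁻¹ * |f r| ≤ K / (β * a ^ β) := by
  have hr1 : ∀ r ∈ Icc a b, 1 < r := fun r hr => ha.trans_le hr.1
  have hpt : ∀ r ∈ Icc a b, (r * Real.log r ^ p)⁻¹ * |f r| ≤ K * r ^ (-β - 1) := by
    intro r hr
    have hr0 : 0 < r := by linarith [hr1 r hr]
    have hL := Real.rpow_pos_of_pos (Real.log_pos (hr1 r hr)) p
    calc _ ≤ (r * Real.log r ^ p)⁻¹ * (K * Real.log r ^ p / r ^ β) :=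
          mul_le_mul_of_nonneg_left (hfK r hr) (by positivity)
      _ = K * r ^ (-β - 1) := by
          rw [Real.rpow_sub_one hr0.ne', Real.rpow_neg hr0.le]; field_simp
  have hwc : ContinuousOn (fun r => (r * Real.log r ^ p)⁻¹) (uIcc a b) := by
    rw [uIcc_of_le hab]
    exact fun r hr => (hasDerivAt_inv_mul_log_rpow (hr1 r hr) p).continuousAt.continuousWithinAt
  have hrpow : ContinuousOn (fun r : ℝ => r ^ (-β - 1)) (Icc a b) :=
    fun r hr =>
      (Real.continuousAt_rpow_const _ _ (Or.inl (by linarith [hr1 r hr]))).continuousWithinAt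
  calc _ ≤ ∫ r in a..b, K * r ^ (-β - 1) := integral_mono_on hab (hf.abs.continuousOn_mul hwc)
          ((continuousOn_const.mul hrpow).intervalIntegrable_of_Icc hab) hpt
    _ = K * ∫ r in a..b, r ^ (-β - 1) := intervalIntegral.integral_const_mul _ _
    _ ≤ K * (1 / (β * a ^ β)) :=
        mul_le_mul_of_nonneg_left (integral_rpow_neg_sub_one_le (by linarith) hab hβ) hK
    _ = K / (β * a ^ β) := by ring

/-- Integration-by-parts oscillatory integral estimate under the second-derivative condition
`|F''(r)| ≤ K (log r)^{3/4} / r^β`: there is an absolute constant `C > 0` such that for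
`2 ≤ a ≤ b`, `β > 0`, and any twice continuously differentiable phase `F` on `[a,b]` with
`|F'| ≥ m > 0`, one has
`|∫_a^b e^{iF(r)} / (r (log r)^{3/4}) dr| ≤ C (1/(a m) + K/(β a^β m²))`. -/
theorem oscillatory_integral_estimate_power_decay
    : ∃ C : ℝ, 0 < C ∧
      ∀ a b : ℝ, 2 ≤ a → a ≤ b → ∀ β : ℝ, 0 < β →
      ∀ F F' F'' : ℝ → ℝ,
        (∀ r ∈ Set.Icc a b, HasDerivAt F (F' r) r) →
        (∀ r ∈ Set.Icc a b, HasDerivAt F' (F'' r) r) →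
        ContinuousOn F'' (Set.Icc a b) →
      ∀ m : ℝ, 0 < m → ∀ K : ℝ, 0 ≤ K →
        (∀ r ∈ Set.Icc a b, m ≤ |F' r|) →
        (∀ r ∈ Set.Icc a b, |F'' r| ≤ K * Real.log r ^ ((3 : ℝ) / 4) / r ^ β) →
        ‖∫ r in a..b, Complex.exp (Complex.I * (F r : ℝ)) /
            ((r * Real.log r ^ ((3 : ℝ) / 4) : ℝ) : ℂ)‖ ≤
          C * (1 / (a * m) + K / (β * a ^ β * m ^ 2)) := by
  refine ⟨4, by norm_num, fun a b ha hab β hβ F F' F'' hF hF' hF''c m hm K hK hF'm hF''K ↦ ?_⟩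
  have hr1 : ∀ r ∈ Icc a b, 1 < r := fun r hr => by linarith [hr.1]
  have hibp := norm_integral_exp_mul_le_of_deriv_nonpos hab hm hF hF'
    (hF''c.intervalIntegrable_of_Icc hab) hF'm
    (fun r hr => hasDerivAt_inv_mul_log_rpow (hr1 r hr) ((3 : ℝ) / 4))
    (fun r hr => by
      have := zero_lt_one.trans (hr1 r hr)
      have := Real.log_pos (hr1 r hr)
      positivity)
    (fun r hr => by
      have := Real.log_pos (hr1 r hr)
      exact div_nonpos_of_nonpos_of_nonneg (neg_nonpos.mpr (by positivity)) (sq_nonneg _))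
  calc _ = ‖∫ r in a..b, Complex.exp (Complex.I * F r) *
          (((r * Real.log r ^ ((3 : ℝ) / 4))⁻¹ : ℝ) : ℂ)‖ := by
        simp only [div_eq_mul_inv, Complex.ofReal_inv]
    _ ≤ _ := hibp
    _ ≤ 2 * (2 / a) / m + K / (β * a ^ β) / m ^ 2 := by
        gcongr
        · exact inv_mul_log_rpow_le ha (by norm_num) (by norm_num)
        · exact integral_inv_mul_log_rpow_mul_abs_le (by linarith) hab hβ hK
            (hF''c.intervalIntegrable_of_Icc hab) hF''K
    _ = 4 * (1 / (a * m)) + K / (β * a ^ β * m ^ 2) := by ring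
    _ ≤ 4 * (1 / (a * m) + K / (β * a ^ β * m ^ 2)) := by
        have : 0 ≤ K / (β * a ^ β * m ^ 2) := by positivity
        linarith
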